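/- arXiv:2405.02909 — 3 statements merged into one kernel-verified Lean document; each statement's English description precedes it below -/
import Mathlib

section
/- Let F_q be a finite field, d ≥ 1, k ≥ 0, and r ∈ F_q a nonzero square, say r = s² with s ≠ 0. If E ⊆ F_q^d satisfies |E|² ≥ (k+1)·q^d, then there exist a ∈ F_q^d and injective tuples (x_1,…,x_{k+1}) ∈ E^{k+1}, (y_1,…,y_{k+1}) ∈ E^{k+1} such that y_i + a = s·x_i for all i; consequently ‖y_i − y_j‖ = r‖x_i − x_j‖ for all i < j, where ‖α‖ = α_1² + ⋯ + α_d². -/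
theorem similar_configurations_finite_field (F : Type*) [Field F] [Fintype F] [DecidableEq F]
    (d k : ℕ) (hd : 1 ≤ d) (s r : F) (hs : s ≠ 0) (hr : r = s ^ 2)
    (E : Finset (Fin d → F)) (hE : (k + 1) * Fintype.card F ^ d ≤ E.card ^ 2) :
    ∃ a : Fin d → F, ∃ x y : Fin (k + 1) → (Fin d → F),
      Function.Injective x ∧ Function.Injective y ∧
      (∀ i, x i ∈ E) ∧ (∀ i, y i ∈ E) ∧
      (∀ i, y i + a = s • x i) ∧
      (∀ i j : Fin (k + 1), i < j →
        (∑ t, (y i t - y j t) ^ 2) = r * ∑ t, (x i t - x j t) ^ 2) := by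
  -- pigeonhole on a := s•x - y
  have hmaps : ∀ p ∈ E ×ˢ E, (s • p.1 - p.2) ∈ (Finset.univ : Finset (Fin d → F)) := by
    intro p _; exact Finset.mem_univ _
  have hcard : (Finset.univ : Finset (Fin d → F)).card * (k + 1) ≤ (E ×ˢ E).card := by
    rw [Finset.card_univ, Finset.card_product]
    calc Fintype.card (Fin d → F) * (k + 1)
        = (k + 1) * Fintype.card F ^ d := by
          rw [Fintype.card_fun, Fintype.card_fin, mul_comm]
      _ ≤ E.card ^ 2 := hE
      _ = E.card * E.card := sq E.card
  obtain ⟨a, -, ha⟩ := Finset.exists_le_card_fiber_of_mul_le_card_of_maps_to hmaps Finset.univ_nonempty hcard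
  set Fib := (E ×ˢ E).filter (fun p => s • p.1 - p.2 = a) with hFib
  -- image under fst has the same cardinality
  have hinj : Set.InjOn Prod.fst (↑Fib : Set ((Fin d → F) × (Fin d → F))) := by
    intro p hp q hq hpq
    simp only [hFib, Finset.coe_filter, Set.mem_setOf_eq] at hp hq
    have h1 := hp.2
    have h2 := hq.2
    rw [hpq] at h1
    have : p.2 = q.2 := by
      have h3 : s • q.1 - p.2 = s • q.1 - q.2 := h1.trans h2.symm
      have := congrArg (fun z => s • q.1 - z + p.2 + q.2 - s • q.1) h3
      simpa [sub_add_cancel] using (sub_right_injective h3)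
    exact Prod.ext hpq this
  have himg : k + 1 ≤ (Fib.image Prod.fst).card := by
    rwa [Finset.card_image_of_injOn hinj]
  obtain ⟨T, hTsub, hTcard⟩ := Finset.exists_subset_card_eq himg
  let e := T.equivFinOfCardEq hTcard
  refine ⟨a, fun i => (e.symm i : Fin d → F), fun i => s • (e.symm i : Fin d → F) - a, ?_, ?_, ?_, ?_, ?_, ?_⟩
  · intro i j hij
    have : e.symm i = e.symm j := Subtype.ext hij
    simpa using congrArg e this
  · intro i j hij
    have h2 : s • ((e.symm i : Fin d → F)) = s • ((e.symm j : Fin d → F)) := by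
      have := sub_left_injective hij; simpa using this
    have hx : (e.symm i : Fin d → F) = (e.symm j : Fin d → F) :=
      smul_right_injective _ hs h2
    have : e.symm i = e.symm j := Subtype.ext hx
    simpa using congrArg e this
  · intro i
    have hmem : ((e.symm i : Fin d → F)) ∈ Fib.image Prod.fst := hTsub (e.symm i).2
    obtain ⟨p, hp, hfst⟩ := Finset.mem_image.mp hmem
    rw [hFib, Finset.mem_filter, Finset.mem_product] at hp
    show (e.symm i : Fin d → F) ∈ E
    rw [← hfst]; exact hp.1.1
  · intro i
    have hmem : ((e.symm i : Fin d → F)) ∈ Fib.image Prod.fst := hTsub (e.symm i).2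
    obtain ⟨p, hp, hfst⟩ := Finset.mem_image.mp hmem
    rw [hFib, Finset.mem_filter, Finset.mem_product] at hp
    have h2 : p.2 = s • p.1 - a := by rw [← hp.2]; abel
    show s • (e.symm i : Fin d → F) - a ∈ E
    rw [← hfst, ← h2]; exact hp.1.2
  · intro i
    show s • (e.symm i : Fin d → F) - a + a = s • (e.symm i : Fin d → F)
    abel
  · intro i j _
    rw [Finset.mul_sum]
    refine Finset.sum_congr rfl fun t _ => ?_
    have : (s • (e.symm i : Fin d → F) - a) t - (s • (e.symm j : Fin d → F) - a) t
        = s * ((e.symm i : Fin d → F) t - (e.symm j : Fin d → F) t) := by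
      simp [Pi.smul_apply, smul_eq_mul]; ring
    rw [this, hr]; ring
end

section
/- Let F_q be a finite field, d ≥ 2, k ≥ 0, and r ∈ F_q nonzero with r = s^d for some s ∈ F_q. If E ⊆ F_q^d satisfies |E|² ≥ (k+1)·q^d, then there exist g ∈ SL_d(F_q) and sequences of distinct points z_1,…,z_{k+1} with z_i ∈ (s·E) ∩ (g·E); consequently there are tuples (x_i), (y_i) in E^{k+1} such that det(x_{i_1},…,x_{i_d}) = r · det(y_{i_1},…,y_{i_d}) for every choice of d indices i_1,…,i_d from {1,…,k+1}. -/
/-!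
Double counting over the action of `SL_d(F_q)` on `F_q^d`:
`∑_g |sE ∩ gE| = ∑_{x, y ∈ E} #{g | g • y = s • x}`. The group acts transitively on nonzero
vectors (it is transitive on lines, and for `d ≥ 2` the stabiliser of a line induces every
scalar on it), so each fibre between nonzero vectors has `|SL_d| / (q^d - 1)` elements, while
the zero vector is fixed by everything. Hence, with `E* = E \ {0}`, the average of `|sE ∩ gE|`
is `|E*|² / (q^d - 1) + [0 ∈ E] ≥ |E|² / q^d ≥ k + 1` (Cauchy–Schwarz), and some `g` has
`k + 1` common points `z_i = g x_i = s y_i`. For the column matrices this reads `g X = s Y`, and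
taking determinants gives `det X = s^d det Y = r det Y`.
-/

open Finset Pointwise

theorem Nat.succ_mul_sub_one_le_of_succ_mul_le_sq {k Q n : ℕ} (h : (k + 1) * Q ≤ (n + 1) ^ 2) :
    (k + 1) * (Q - 1) ≤ Q - 1 + n ^ 2 := by
  obtain _ | P := Q
  · simp
  · simp only [Nat.add_sub_cancel]
    -- AM-GM: if `n² < k P` then `2 n < k + P`.
    nlinarith [sq_nonneg ((k : ℤ) - P)]

section Counting

variable {G α : Type*} [Group G] [MulAction G α] [DecidableEq α]

theorem card_inter_smul_finset_eq (A B : Finset α) (g : G) :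
    #(A ∩ g • B) = #{p ∈ A ×ˢ B | g • p.2 = p.1} := by
  refine (card_nbij' Prod.fst (fun a => (a, g⁻¹ • a)) ?_ ?_ ?_ ?_).symm
  · rintro ⟨_, b⟩ hp
    obtain ⟨⟨ha, hb⟩, rfl⟩ : (_ ∧ _) ∧ _ := by simpa using hp
    exact mem_inter.2 ⟨ha, smul_mem_smul_finset hb⟩
  · intro a
    simp [Set.mem_smul_set_iff_inv_smul_mem]
  · rintro ⟨_, b⟩ hp
    obtain ⟨-, rfl⟩ : _ ∧ _ := by simpa using hp
    simp
  · intro a _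
    rfl

variable [Fintype G]

theorem sum_card_inter_smul_finset (A B : Finset α) :
    ∑ g : G, #(A ∩ g • B) = ∑ a ∈ A, ∑ b ∈ B, #{g : G | g • b = a} := by
  simp_rw [card_inter_smul_finset_eq]
  rw [← sum_product']
  exact sum_card_bipartiteAbove_eq_sum_card_bipartiteBelow _

theorem card_filter_smul_eq_of_smul_eq {a b : α} {g₀ : G} (h : g₀ • b = a) :
    #{g : G | g • b = a} = #{g : G | g • b = b} := by
  subst h
  refine card_nbij' (g₀⁻¹ * ·) (g₀ * ·) ?_ ?_ ?_ ?_ <;> intro g <;>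
    simp [mul_smul, inv_smul_eq_iff]

end Counting

namespace Matrix.SpecialLinearGroup

variable {ι F : Type*} [Fintype ι] [DecidableEq ι] [Field F]

theorem exists_smul_eq_units_smul {a b : ι → F} (ha : a ≠ 0) (hb : b ≠ 0) :
    ∃ (g : SpecialLinearGroup ι F) (μ : Fˣ), g • b = μ • a := by
  obtain ⟨g, hg⟩ := MulAction.exists_smul_eq (SpecialLinearGroup ι F)
    (Projectivization.mk F b hb) (Projectivization.mk F a ha)
  rw [Projectivization.smul_mk, Projectivization.mk_eq_mk_iff] at hg
  obtain ⟨μ, hμ⟩ := hg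
  exact ⟨g, μ, hμ.symm⟩

theorem exists_smul_single_eq_units_smul {i j : ι} (hij : i ≠ j) (μ : Fˣ) :
    ∃ g : SpecialLinearGroup ι F,
      g • (Pi.single i 1 : ι → F) = μ • (Pi.single i 1 : ι → F) := by
  let δ : ι → F := Pi.mulSingle i (μ : F) * Pi.mulSingle j (μ⁻¹ : Fˣ)
  refine ⟨⟨diagonal δ, ?_⟩, ?_⟩
  · simp [δ, det_diagonal, prod_mul_distrib]
  · change diagonal δ *ᵥ _ = _
    simp [δ, hij, Units.smul_def, ← Pi.single_smul]

theorem exists_smul_eq_units_smul_self [Nontrivial ι] {a : ι → F} (ha : a ≠ 0) (μ : Fˣ) :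
    ∃ g : SpecialLinearGroup ι F, g • a = μ • a := by
  obtain ⟨i, j, hij⟩ := exists_pair_ne ι
  obtain ⟨h, ν, hh⟩ := exists_smul_eq_units_smul ha (Pi.single_ne_zero_iff.2 one_ne_zero)
  obtain ⟨D, hD⟩ := exists_smul_single_eq_units_smul hij μ
  refine ⟨h * D * h⁻¹, ?_⟩
  have : h⁻¹ • a = ν⁻¹ • Pi.single i 1 := by
    rw [inv_smul_eq_iff, smul_comm, hh, inv_smul_smul]
  rw [mul_smul, mul_smul, this, smul_comm D ν⁻¹, hD, smul_comm ν⁻¹ μ, smul_comm h μ,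
    smul_comm h ν⁻¹, hh, inv_smul_smul]

theorem exists_smul_eq [Nontrivial ι] {a b : ι → F} (ha : a ≠ 0) (hb : b ≠ 0) :
    ∃ g : SpecialLinearGroup ι F, g • b = a := by
  obtain ⟨g, μ, hg⟩ := exists_smul_eq_units_smul ha hb
  obtain ⟨h, hh⟩ := exists_smul_eq_units_smul_self ha μ⁻¹
  exact ⟨h * g, by rw [mul_smul, hg, smul_comm, hh, smul_inv_smul]⟩

theorem det_cols_eq_pow_mul_of_smul_eq (g : SpecialLinearGroup ι F) (s : F) {u v : ι → ι → F}
    (h : ∀ j, g • u j = s • v j) :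
    det (of fun a b => u b a) = s ^ Fintype.card ι * det (of fun a b => v b a) := by
  have : (g : Matrix ι ι F) * of (fun a b => u b a) = s • of fun a b => v b a := by
    ext a b
    simpa [mul_apply, SpecialLinearGroup.smul_def, mulVec, dotProduct] using congrFun (h b) a
  rw [← det_smul, ← this, det_mul, det_coe, one_mul]

variable [Fintype F] [DecidableEq F]

theorem card_sub_one_mul_card_filter_smul_eq [Nontrivial ι] {a b : ι → F}
    (ha : a ≠ 0) (hb : b ≠ 0) :
    (Fintype.card (ι → F) - 1) * #{g : SpecialLinearGroup ι F | g • b = a} =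
      Fintype.card (SpecialLinearGroup ι F) := by
  have hfib : ∀ a' ≠ 0, #{g : SpecialLinearGroup ι F | g • b = a'} =
      #{g : SpecialLinearGroup ι F | g • b = b} :=
    fun a' ha' => card_filter_smul_eq_of_smul_eq (exists_smul_eq ha' hb).choose_spec
  have hcard := card_eq_sum_card_fiberwise (s := univ) (t := univ.erase 0)
    (f := fun g : SpecialLinearGroup ι F => g • b)
    (fun g _ => mem_erase.2 ⟨(smul_ne_zero_iff_ne g).2 hb, mem_univ _⟩)
  rw [sum_congr rfl fun a' ha' => hfib a' (ne_of_mem_erase ha'), sum_const,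
    card_erase_of_mem (mem_univ _), card_univ, card_univ, smul_eq_mul] at hcard
  rw [hfib a ha, hcard]

theorem card_sub_one_mul_sum_sum_card_filter_smul_eq [Nontrivial ι] {A B : Finset (ι → F)}
    (hA : 0 ∉ A) (hB : 0 ∉ B) :
    (Fintype.card (ι → F) - 1) * ∑ a ∈ A, ∑ b ∈ B, #{g : SpecialLinearGroup ι F | g • b = a} =
      #A * #B * Fintype.card (SpecialLinearGroup ι F) := by
  have hrow : ∀ a ∈ A, (Fintype.card (ι → F) - 1) *
      ∑ b ∈ B, #{g : SpecialLinearGroup ι F | g • b = a} =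
        #B * Fintype.card (SpecialLinearGroup ι F) := fun a ha => by
    rw [mul_sum, sum_congr rfl fun b hb => card_sub_one_mul_card_filter_smul_eq
      (ne_of_mem_of_not_mem ha hA) (ne_of_mem_of_not_mem hb hB), sum_const, smul_eq_mul]
  rw [mul_sum, sum_congr rfl hrow, sum_const, smul_eq_mul, mul_assoc]

theorem sum_sum_card_filter_smul_eq_insert_zero {A B : Finset (ι → F)}
    (hA : 0 ∉ A) (hB : 0 ∉ B) :
    ∑ a ∈ insert 0 A, ∑ b ∈ insert 0 B, #{g : SpecialLinearGroup ι F | g • b = a} =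
      Fintype.card (SpecialLinearGroup ι F) +
        ∑ a ∈ A, ∑ b ∈ B, #{g : SpecialLinearGroup ι F | g • b = a} := by
  have hto_zero : ∀ b ∈ B, #{g : SpecialLinearGroup ι F | g • b = 0} = 0 := fun b hb =>
    card_eq_zero.2 <| filter_eq_empty_iff.2 fun g _ =>
      (smul_ne_zero_iff_ne g).2 (ne_of_mem_of_not_mem hb hB)
  have hfrom_zero : ∀ a ∈ A, #{g : SpecialLinearGroup ι F | g • (0 : ι → F) = a} = 0 :=
    fun a ha => by simp [(ne_of_mem_of_not_mem ha hA).symm]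
  rw [sum_insert hA, sum_insert hB, sum_eq_zero hto_zero, add_zero,
    filter_true_of_mem fun g _ => smul_zero g, card_univ]
  congr 1
  refine sum_congr rfl fun a ha => ?_
  rw [sum_insert hB, hfrom_zero a ha, zero_add]

theorem exists_le_card_inter_smul [Nontrivial ι] {s : F} (hs : s ≠ 0) {k : ℕ}
    {E : Finset (ι → F)} (hE : (k + 1) * Fintype.card (ι → F) ≤ #E ^ 2) :
    ∃ g : SpecialLinearGroup ι F, k + 1 ≤ #(s • E ∩ g • E) := by
  have hQ : 0 < Fintype.card (ι → F) - 1 := Nat.sub_pos_of_lt Fintype.one_lt_card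
  have hsum : (Fintype.card (ι → F) - 1) * ((k + 1) * Fintype.card (SpecialLinearGroup ι F)) ≤
      (Fintype.card (ι → F) - 1) * ∑ g : SpecialLinearGroup ι F, #(s • E ∩ g • E) := by
    rw [sum_card_inter_smul_finset]
    by_cases h0 : 0 ∈ E
    · have hE' : 0 ∉ s • E.erase 0 := (zero_mem_smul_finset_iff hs).not.2 (notMem_erase 0 E)
      rw [← insert_erase h0, card_insert_of_notMem (notMem_erase 0 E)] at hE
      rw [← insert_erase h0, smul_finset_insert, smul_zero,
        sum_sum_card_filter_smul_eq_insert_zero hE' (notMem_erase 0 E), mul_add,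
        card_sub_one_mul_sum_sum_card_filter_smul_eq hE' (notMem_erase 0 E),
        card_smul_finset₀ hs]
      nlinarith [Nat.mul_le_mul_right (Fintype.card (SpecialLinearGroup ι F))
        (Nat.succ_mul_sub_one_le_of_succ_mul_le_sq hE)]
    · rw [card_sub_one_mul_sum_sum_card_filter_smul_eq
        ((zero_mem_smul_finset_iff hs).not.2 h0) h0, card_smul_finset₀ hs]
      nlinarith [Nat.mul_le_mul_left (k + 1) (Nat.sub_le (Fintype.card (ι → F)) 1)]
  obtain ⟨g, -, hg⟩ := exists_le_of_sum_le univ_nonempty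
    (f := fun _ => k + 1) (by simpa [mul_comm] using Nat.le_of_mul_le_mul_left hsum hQ)
  exact ⟨g, hg⟩

end Matrix.SpecialLinearGroup

theorem det_similar_configurations (F : Type*) [Field F] [Fintype F] [DecidableEq F]
    (d k : ℕ) (hd : 2 ≤ d) (s r : F) (hr : r = s ^ d) (hr0 : r ≠ 0)
    (E : Finset (Fin d → F)) (hE : (k + 1) * Fintype.card F ^ d ≤ E.card ^ 2) :
    ∃ g : Matrix.SpecialLinearGroup (Fin d) F, ∃ z : Fin (k + 1) → (Fin d → F),
      Function.Injective z ∧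
      (∀ i, z i ∈ (E.image (fun x => s • x)) ∩
        (E.image (fun x => (g : Matrix (Fin d) (Fin d) F).mulVec x))) ∧
      ∃ x y : Fin (k + 1) → (Fin d → F),
        (∀ i, x i ∈ E) ∧ (∀ i, y i ∈ E) ∧
        ∀ idx : Fin d → Fin (k + 1),
          Matrix.det (Matrix.of fun a b => x (idx b) a)
            = r * Matrix.det (Matrix.of fun a b => y (idx b) a) := by
  have : Nontrivial (Fin d) := Fin.nontrivial_iff_two_le.2 hd
  have hs : s ≠ 0 := by rintro rfl; simp [hr, zero_pow (by omega : d ≠ 0)] at hr0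
  obtain ⟨g, hg⟩ := Matrix.SpecialLinearGroup.exists_le_card_inter_smul hs
    (k := k) (E := E) (by simpa using hE)
  let z := (Fin.castLEEmb hg).trans (s • E ∩ g • E).equivFin.symm.toEmbedding
  have hz (i : Fin (k + 1)) : (z i : Fin d → F) ∈ s • E ∩ g • E := (z i).2
  choose x hxE hxz using fun i => mem_smul_finset.1 (mem_inter.1 (hz i)).2
  choose y hyE hyz using fun i => mem_smul_finset.1 (mem_inter.1 (hz i)).1
  refine ⟨g, fun i => z i, Subtype.val_injective.comp z.injective, hz, x, y, hxE, hyE,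
    fun idx => ?_⟩
  simpa [hr] using Matrix.SpecialLinearGroup.det_cols_eq_pow_mul_of_smul_eq g s
    fun j => (hxz (idx j)).trans (hyz (idx j)).symm
end

section
/- Measure-theoretic pigeonhole principle: Let (X, M, σ) be a measure space with σ(X) < ∞, let 0 < c, and let n ≥ 1. Then there exists N (depending on σ(X), c, n) such that for any measurable sets A_1, …, A_N with σ(A_i) ≥ c for all i, there exist indices i_1 < ⋯ < i_n with σ(A_{i_1} ∩ ⋯ ∩ A_{i_n}) > 0; in particular the intersection is nonempty. -/
/-!
The integral of the number of sets `A i` containing a point is `∑ i, σ (A i) ≥ N c`. If every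
intersection of `n` of the sets were null, almost every point would lie in at most `n - 1` of
them and the same integral would be at most `(n - 1) σ(X)`; so any `N` with
`(n - 1) σ(X) < N c` works.
-/

open MeasureTheory ENNReal Finset

open Classical in
lemma Finset.card_filter_mem_le_of_forall_notMem_biInter {X ι : Type*} [Fintype ι]
    {A : ι → Set X} {x : X} {n : ℕ} (hx : ∀ t : Finset ι, #t = n + 1 → x ∉ ⋂ i ∈ t, A i) :
    #{i | x ∈ A i} ≤ n := by
  by_contra! hn
  obtain ⟨t, hts, htn⟩ := exists_subset_card_eq hn
  exact hx t htn (Set.mem_biInter fun i hi ↦ (mem_filter.mp (hts hi)).2)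

namespace MeasureTheory

variable {X ι : Type*} [MeasurableSpace X] [Fintype ι]

open Classical in
lemma sum_measure_eq_lintegral_card_filter_mem (σ : Measure X) {A : ι → Set X}
    (hA : ∀ i, MeasurableSet (A i)) :
    ∑ i, σ (A i) = ∫⁻ x, (#{i | x ∈ A i} : ℝ≥0∞) ∂σ := by
  have hcard (x : X) : (#{i | x ∈ A i} : ℝ≥0∞) = ∑ i, (A i).indicator 1 x := by
    simp [Set.indicator_apply, sum_boole]
  simp_rw [hcard]
  rw [lintegral_finsetSum _ fun i _ ↦ measurable_one.indicator (hA i)]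
  simp [lintegral_indicator_one (hA _)]

theorem exists_card_eq_measure_biInter_pos (σ : Measure X) {A : ι → Set X}
    (hA : ∀ i, MeasurableSet (A i)) {n : ℕ} (h : n * σ Set.univ < ∑ i, σ (A i)) :
    ∃ t : Finset ι, #t = n + 1 ∧ 0 < σ (⋂ i ∈ t, A i) := by
  classical
  by_contra! hnull
  have hae : ∀ᵐ x ∂σ, ∀ t : Finset ι, #t = n + 1 → x ∉ ⋂ i ∈ t, A i := by
    rw [ae_all_iff]
    intro t
    by_cases ht : #t = n + 1
    · simpa [ht] using measure_eq_zero_iff_ae_notMem.mp (nonpos_iff_eq_zero.mp (hnull t ht))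
    · simp [ht]
  refine h.not_ge ?_
  calc ∑ i, σ (A i) = ∫⁻ x, (#{i | x ∈ A i} : ℝ≥0∞) ∂σ :=
        sum_measure_eq_lintegral_card_filter_mem σ hA
    _ ≤ ∫⁻ _, (n : ℝ≥0∞) ∂σ := lintegral_mono_ae <| hae.mono fun x hx ↦ by
        exact_mod_cast card_filter_mem_le_of_forall_notMem_biInter hx
    _ = n * σ Set.univ := lintegral_const _

end MeasureTheory

theorem measure_pigeonhole (X : Type*) [MeasurableSpace X] (σ : Measure X)
    [IsFiniteMeasure σ] (c : ℝ≥0∞) (hc : 0 < c) (n : ℕ) (hn : 1 ≤ n) :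
    ∃ N : ℕ, ∀ A : Fin N → Set X, (∀ i, MeasurableSet (A i)) → (∀ i, c ≤ σ (A i)) →
      ∃ t : Finset (Fin N), t.card = n ∧ 0 < σ (⋂ i ∈ t, A i) ∧ (⋂ i ∈ t, A i).Nonempty := by
  obtain ⟨m, rfl⟩ := Nat.exists_eq_add_of_le' hn
  obtain ⟨N, hN⟩ :=
    exists_nat_mul_gt hc.ne' (mul_ne_top (natCast_ne_top m) (measure_ne_top σ Set.univ))
  refine ⟨N, fun A hA hAc ↦ ?_⟩
  have hsum : m * σ Set.univ < ∑ i, σ (A i) := calc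
    m * σ Set.univ < N * c := hN
    _ ≤ ∑ i, σ (A i) := by simpa using card_nsmul_le_sum univ _ c fun i _ ↦ hAc i
  obtain ⟨t, htn, htpos⟩ := exists_card_eq_measure_biInter_pos σ hA hsum
  exact ⟨t, htn, htpos, nonempty_of_measure_ne_zero htpos.ne'⟩
end
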